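/- arXiv:2504.03430 — 3 statements merged into one kernel-verified Lean document; each statement's English description precedes it below -/
import Mathlib

section
/- Suppose v_P(l_n) ≥ −q^s·⌊n/deg(P)⌋ for all n (coefficients of the logarithm series log_E = ∑ l_n τ^n). Then for every x in L_P^d with v_P(x) > 0, the series log_{E,P}(x) = ∑_{n≥0} l_n τ^n(x) converges P-adically; moreover if v_P(x) > q^s/(q^{deg P} − 1), then v_P(l_n τ^n(x)) ≥ v_P(x) for all n ≥ 1, so log_{E,P} is an isometry on the open disc {x : v_P(x) > q^s/(q^{deg P} − 1)}. -/
/-!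
The `n`-th term `l n *ᵥ φ^[n] x` of the logarithm has valuation at least
`-q^s ⌊n/dP⌋ + q^n v(x)`. For `v(x) > 0` this tends to `∞`, so by the ultrametric inequality
the partial sums are Cauchy. If moreover `v(x) > B := q^s/(q^dP - 1)`, Bernoulli's inequality
`q^n - 1 ≥ ⌊n/dP⌋ (q^dP - 1)` shows that for `n ≥ 1` the bound exceeds `v(x)` by at least
`v(x) - B > 0`. Hence `log x - x` has valuation strictly above `v(x)`, and the isosceles triangle
property gives `v(log x) = v(x)`.
-/

open Filter Topology

theorem tendsto_pow_mul_sub_mul_atTop {r c : ℝ} (hr : 1 < r) (hc : 0 < c) (A : ℝ) :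
    Tendsto (fun n : ℕ => r ^ n * c - A * n) atTop atTop := by
  have hlim : Tendsto (fun n : ℕ => c - A * (n / r ^ n)) atTop (𝓝 c) := by
    simpa using ((tendsto_pow_const_div_const_pow_of_one_lt 1 hr).const_mul A).const_sub c
  refine ((tendsto_pow_atTop_atTop_of_one_lt hr).atTop_mul_pos hc hlim).congr fun n => ?_
  have : r ^ n ≠ 0 := (pow_pos (zero_lt_one.trans hr) n).ne'
  field_simp

theorem one_add_div_mul_le_pow {q : ℚ} (hq : 1 ≤ q) (dP n : ℕ) :
    1 + (n / dP : ℕ) * (q ^ dP - 1) ≤ q ^ n :=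
  calc 1 + (n / dP : ℕ) * (q ^ dP - 1) ≤ (1 + (q ^ dP - 1)) ^ (n / dP) :=
        one_add_mul_le_pow (by linarith [one_le_pow₀ (n := dP) hq]) _
    _ = q ^ (dP * (n / dP)) := by rw [add_sub_cancel, pow_mul]
    _ ≤ q ^ n := pow_le_pow_right₀ hq (Nat.mul_div_le n dP)

/-- With `B = q^s / (q^dP - 1)` and `u = q^n - 1 ≥ max 1 (⌊n/dP⌋ (q^dP - 1))`, the right-hand
side minus `c` is at least `u c - u B ≥ c - B`. -/
theorem add_sub_le_pow_mul_sub {q c : ℚ} (hq : 2 ≤ q) (s : ℕ) {dP n : ℕ} (hdP : 0 < dP)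
    (hn : 1 ≤ n) (hc : q ^ s / (q ^ dP - 1) ≤ c) :
    c + (c - q ^ s / (q ^ dP - 1)) ≤ q ^ n * c - q ^ s * (n / dP : ℕ) := by
  set B := q ^ s / (q ^ dP - 1)
  have hQ : 1 ≤ q ^ dP - 1 := by linarith [le_self_pow₀ (by linarith : 1 ≤ q) hdP.ne']
  have hB : 0 ≤ B := by positivity
  have hqs : q ^ s = B * (q ^ dP - 1) := (div_mul_cancel₀ _ (by linarith)).symm
  have hqn : 2 ≤ q ^ n := hq.trans (le_self_pow₀ (by linarith) (by omega))
  have hk : (n / dP : ℕ) * (q ^ dP - 1) ≤ q ^ n - 1 := by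
    linarith [one_add_div_mul_le_pow (by linarith : 1 ≤ q) dP n]
  rw [hqs]
  nlinarith [mul_le_mul_of_nonneg_right hk hB,
    mul_nonneg (by linarith : (0 : ℚ) ≤ q ^ n - 2) (sub_nonneg.mpr hc)]

theorem pow_nsmul_top {q : ℕ} (hq : 0 < q) (n : ℕ) : q ^ n • (⊤ : WithTop ℚ) = ⊤ := by
  obtain ⟨k, hk⟩ := Nat.exists_eq_add_one_of_ne_zero (pow_pos hq n).ne'
  rw [hk, succ_nsmul, WithTop.add_top]

/-- Lower bound for `v (l n *ᵥ φ^[n] x)` when `c ≤ v x`. -/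
def logTermBound (q s dP n : ℕ) (c : WithTop ℚ) : WithTop ℚ :=
  ((-(q ^ s * (n / dP) : ℕ) : ℚ) : WithTop ℚ) + q ^ n • c

section LogTermBound

variable {q : ℕ} (s dP : ℕ)

theorem exists_forall_le_logTermBound (hq : 2 ≤ q) {c : WithTop ℚ} (hc : 0 < c) (N : ℚ) :
    ∃ M, ∀ n ≥ M, (N : WithTop ℚ) ≤ logTermBound q s dP n c := by
  induction c with
  | top => exact ⟨0, fun n _ => by simp [logTermBound, pow_nsmul_top (by omega : 0 < q)]⟩
  | coe c =>
    have hr : (1 : ℝ) < q := by exact_mod_cast hq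
    have hc₀ : (0 : ℝ) < c := by exact_mod_cast WithTop.coe_pos.mp hc
    obtain ⟨M, hM⟩ :=
      tendsto_atTop_atTop.mp (tendsto_pow_mul_sub_mul_atTop hr hc₀ ((q : ℝ) ^ s)) N
    refine ⟨M, fun n hn => ?_⟩
    have hNr : (N : ℝ) ≤ (q : ℝ) ^ n * c - (q : ℝ) ^ s * n := hM n hn
    have hN : N ≤ (q : ℚ) ^ n * c - (q : ℚ) ^ s * n := by exact_mod_cast hNr
    have hdiv : (q : ℚ) ^ s * (n / dP : ℕ) ≤ (q : ℚ) ^ s * n := by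
      gcongr; exact_mod_cast Nat.div_le_self n dP
    simp only [logTermBound, ← WithTop.coe_nsmul, ← WithTop.coe_add, WithTop.coe_le_coe,
      nsmul_eq_mul]
    push_cast
    linarith

theorem exists_pos_forall_add_le_logTermBound (hq : 2 ≤ q) (hdP : 0 < dP) {c : WithTop ℚ}
    (hc : (((q : ℚ) ^ s / ((q : ℚ) ^ dP - 1) : ℚ) : WithTop ℚ) < c) :
    ∃ ε : ℚ, 0 < ε ∧ ∀ n ≥ 1, c + ε ≤ logTermBound q s dP n c := by
  induction c with
  | top =>
    exact ⟨1, one_pos, fun n _ => by simp [logTermBound, pow_nsmul_top (by omega : 0 < q)]⟩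
  | coe c =>
    have hc' : (q : ℚ) ^ s / ((q : ℚ) ^ dP - 1) < c := by exact_mod_cast hc
    refine ⟨c - (q : ℚ) ^ s / ((q : ℚ) ^ dP - 1), sub_pos.mpr hc', fun n hn => ?_⟩
    have key := add_sub_le_pow_mul_sub (by exact_mod_cast hq) s hdP hn hc'.le
    simp only [logTermBound, ← WithTop.coe_nsmul, ← WithTop.coe_add, WithTop.coe_le_coe,
      nsmul_eq_mul]
    push_cast
    linarith

end LogTermBound

theorem apply_iterate_eq_pow_nsmul {α M : Type*} [AddMonoid M] {v : α → M} {f : α → α} {q : ℕ}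
    (h : ∀ x, v (f x) = q • v x) (n : ℕ) (x : α) : v (f^[n] x) = q ^ n • v x := by
  induction n with
  | zero => simp
  | succ n ih => rw [Function.iterate_succ_apply', h, ih, smul_smul, ← pow_succ']

structure IsOverAdditive {R : Type*} [Ring R] (v : R → WithTop ℚ) : Prop where
  map_zero : v 0 = ⊤
  min_le_map_add (x y : R) : min (v x) (v y) ≤ v (x + y)
  add_le_map_mul (x y : R) : v x + v y ≤ v (x * y)

namespace IsOverAdditive

open Finset Matrix

variable {R : Type*} [Ring R] {v : R → WithTop ℚ}

theorem le_sum (hv : IsOverAdditive v) {ι : Type*} {s : Finset ι} {g : ι → R} {N : WithTop ℚ}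
    (h : ∀ i ∈ s, N ≤ v (g i)) : N ≤ v (∑ i ∈ s, g i) :=
  sum_induction g (fun z => N ≤ v z)
    (fun a b ha hb => (le_min ha hb).trans (hv.min_le_map_add a b)) (hv.map_zero ▸ le_top) h

theorem le_mulVec (hv : IsOverAdditive v) {m n : Type*} [Fintype n] {A : Matrix m n R}
    {w : n → R} {a b : WithTop ℚ} (hA : ∀ i j, a ≤ v (A i j)) (hw : ∀ j, b ≤ v (w j))
    (i : m) : a + b ≤ v ((A *ᵥ w) i) :=
  hv.le_sum fun j _ => (add_le_add (hA i j) (hw j)).trans (hv.add_le_map_mul _ _)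

/-- `v (-1) = q • v (-1)` because `φ (-1) = -1`; with `q ≠ 1` this forces `0 ≤ v (-1)`. -/
theorem map_neg (hv : IsOverAdditive v) {φ : R →+* R} {q : ℕ} (hq : q ≠ 1)
    (hφ : ∀ x, v (φ x) = q • v x) (x : R) : v (-x) = v x := by
  have hv1 : 0 ≤ v (-1) := by
    have h := hφ (-1)
    rw [_root_.map_neg, map_one] at h
    induction hc : v (-1) with
    | top => exact le_top
    | coe r =>
      rw [hc, ← WithTop.coe_nsmul, WithTop.coe_inj, nsmul_eq_mul] at h
      have : r = 0 := by
        by_contra hr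
        exact hq (by exact_mod_cast (mul_eq_right₀ hr).mp h.symm)
      simp [this]
  have hle (z : R) : v z ≤ v (-z) := by
    simpa using (add_le_add hv1 le_rfl).trans (hv.add_le_map_mul (-1) z)
  exact le_antisymm (by simpa using hle (-x)) (hle x)

theorem inf_add_eq (hv : IsOverAdditive v) (hneg : ∀ z, v (-z) = v z) {ι : Type*} [Fintype ι]
    [Nonempty ι] (x e : ι → R) {ε : ℚ} (hε : 0 < ε)
    (he : ∀ i, univ.inf (fun i => v (x i)) + ε ≤ v (e i)) :
    univ.inf (fun i => v (x i + e i)) = univ.inf (fun i => v (x i)) := by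
  set c := univ.inf fun i => v (x i)
  have hce (i : ι) : c ≤ v (e i) :=
    (le_add_of_nonneg_right (by exact_mod_cast hε.le)).trans (he i)
  refine le_antisymm ?_ (Finset.le_inf fun i _ =>
    (le_min (inf_le (mem_univ i)) (hce i)).trans (hv.min_le_map_add _ _))
  obtain ⟨i₀, -, hi₀⟩ := exists_mem_eq_inf univ univ_nonempty fun i => v (x i)
  refine (inf_le (mem_univ i₀)).trans (not_lt.mp fun hlt => ?_)
  have hce₀ : c < v (-e i₀) := by
    simpa [hneg] using (WithTop.add_lt_add_left (ne_top_of_lt hlt)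
      (WithTop.coe_lt_coe.mpr hε)).trans_le (he i₀)
  have := (lt_min hlt hce₀).trans_le (hv.min_le_map_add _ _)
  rw [add_neg_cancel_right, ← hi₀] at this
  exact lt_irrefl _ this

theorem cauchy_sum_range (hv : IsOverAdditive v) {ι : Type*} {t : ℕ → ι → R}
    (ht : ∀ N : ℚ, ∃ M, ∀ n ≥ M, ∀ i, (N : WithTop ℚ) ≤ v (t n i)) (N : ℚ) :
    ∃ M, ∀ m ≥ M, ∀ k : ℕ, ∀ i,
      (N : WithTop ℚ) ≤ v ((∑ n ∈ range (m + k), t n) i - (∑ n ∈ range m, t n) i) := by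
  obtain ⟨M, hM⟩ := ht N
  refine ⟨M, fun m hm k i => ?_⟩
  rw [Finset.sum_apply, Finset.sum_apply, ← sum_Ico_eq_sub _ (Nat.le_add_right m k)]
  exact hv.le_sum fun n hn => hM n (hm.trans (mem_Ico.mp hn).1) i

theorem le_sub_of_tendsto (hv : IsOverAdditive v) {ι : Type*} {S : ℕ → ι → R} {y z : ι → R}
    (hy : ∀ N : ℚ, ∃ M, ∀ m ≥ M, ∀ i, (N : WithTop ℚ) ≤ v (y i - S m i)) {a : WithTop ℚ}
    {M₀ : ℕ} (hS : ∀ m ≥ M₀, ∀ i, a ≤ v (S m i - z i)) (i : ι) : a ≤ v (y i - z i) := by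
  refine le_of_forall_lt fun b hb => ?_
  lift b to ℚ using ne_top_of_lt hb
  obtain ⟨M, hM⟩ := hy (b + 1)
  set m := max M M₀
  have hyS : (b : WithTop ℚ) < v (y i - S m i) :=
    (WithTop.coe_lt_coe.mpr (lt_add_one b)).trans_le (hM m (le_max_left _ _) i)
  have := (lt_min hyS (hb.trans_le (hS m (le_max_right _ _) i))).trans_le
    (hv.min_le_map_add _ _)
  rwa [sub_add_sub_cancel] at this

end IsOverAdditive

theorem stmt_8_general {R : Type*} [CommRing R]
    (q dP s d : ℕ) (hq : 2 ≤ q) (hdP : 0 < dP) [NeZero d]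
    (v : R → WithTop ℚ)
    (hv0 : v 0 = ⊤)
    (hvadd : ∀ x y : R, min (v x) (v y) ≤ v (x + y))
    (hvmul : ∀ x y : R, v x + v y ≤ v (x * y))
    (φ : R →+* R) (hφ : ∀ x : R, v (φ x) = q • v x)
    (l : ℕ → Matrix (Fin d) (Fin d) R) (hl0 : l 0 = 1)
    (hl : ∀ n i j, ((-(q ^ s * (n / dP) : ℕ) : ℚ) : WithTop ℚ) ≤ v (l n i j))
    (hcomplete : ∀ f : ℕ → Fin d → R,
      (∀ N : ℚ, ∃ M, ∀ m ≥ M, ∀ k : ℕ, ∀ i, (N : WithTop ℚ) ≤ v (f (m + k) i - f m i)) →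
      ∃ y : Fin d → R, ∀ N : ℚ, ∃ M, ∀ m ≥ M, ∀ i, (N : WithTop ℚ) ≤ v (y i - f m i)) :
    ∀ x : Fin d → R, (∀ i, 0 < v (x i)) →
      ∃ y : Fin d → R,
        (∀ N : ℚ, ∃ M, ∀ m ≥ M, ∀ i, (N : WithTop ℚ)
            ≤ v (y i - (∑ n ∈ Finset.range m, (l n).mulVec fun j => φ^[n] (x j)) i)) ∧
        ((((q ^ s : ℚ) / ((q : ℚ) ^ dP - 1) : ℚ) : WithTop ℚ)
            < Finset.univ.inf (fun i => v (x i)) →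
          (∀ n : ℕ, 1 ≤ n → ∀ i,
            Finset.univ.inf (fun j => v (x j))
              ≤ v (((l n).mulVec fun j => φ^[n] (x j)) i)) ∧
          Finset.univ.inf (fun i => v (y i)) = Finset.univ.inf (fun i => v (x i))) := by
  intro x hx
  have hv : IsOverAdditive v := ⟨hv0, hvadd, hvmul⟩
  set t : ℕ → Fin d → R := fun n => (l n).mulVec fun j => φ^[n] (x j)
  set c := Finset.univ.inf fun i => v (x i)
  have hc : 0 < c := (Finset.lt_inf_iff WithTop.top_pos).mpr fun i _ => hx i
  have hterm (n : ℕ) (i : Fin d) : logTermBound q s dP n c ≤ v (t n i) :=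
    hv.le_mulVec (hl n) (fun j => (apply_iterate_eq_pow_nsmul hφ n (x j)).symm ▸
      nsmul_le_nsmul_right (Finset.inf_le (Finset.mem_univ j)) _) i
  have hnull (N : ℚ) : ∃ M, ∀ n ≥ M, ∀ i, (N : WithTop ℚ) ≤ v (t n i) :=
    (exists_forall_le_logTermBound s dP hq hc N).imp fun _ hM n hn i =>
      (hM n hn).trans (hterm n i)
  obtain ⟨y, hy⟩ := hcomplete (fun m => ∑ n ∈ Finset.range m, t n) (hv.cauchy_sum_range hnull)
  refine ⟨y, hy, fun hB => ?_⟩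
  obtain ⟨ε, hε, hεc⟩ := exists_pos_forall_add_le_logTermBound s dP hq hdP hB
  have htail (n : ℕ) (hn : 1 ≤ n) (i : Fin d) : c + ε ≤ v (t n i) := (hεc n hn).trans (hterm n i)
  have hcε : c ≤ c + ε := le_add_of_nonneg_right (by exact_mod_cast hε.le)
  refine ⟨fun n hn i => hcε.trans (htail n hn i), ?_⟩
  have hyx : ∀ i, c + ε ≤ v (y i - x i) := hv.le_sub_of_tendsto hy (M₀ := 1) fun m hm i => by
    rw [Finset.sum_range_eq_add_Ico _ hm]
    simpa [t, hl0, Finset.sum_apply] using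
      hv.le_sum fun n hn => htail n (Finset.mem_Ico.mp hn).1 i
  simpa using hv.inf_add_eq (hv.map_neg (by omega) hφ) x (y - x) hε hyx

/-- (Convergence and isometry of the `P`-adic logarithm.)
Let `R` stand for `L_P` with its over-additive `P`-adic valuation `v` (extended
entrywise, with values in `WithTop ℚ`), `φ` the `q`-Frobenius (so `v(φ x) = q·v(x)`),
and `log_E = ∑ l_n τ^n` with `l_0 = I_d` and `v_P(l_n) ≥ −q^s⌊n/deg P⌋`.  Then for
every `x ∈ L_P^d` with `v_P(x) > 0` the series `log_{E,P}(x) = ∑ l_n τ^n(x)` converges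
`P`-adically (assuming `R` complete); moreover if `v_P(x) > q^s/(q^{deg P} − 1)` then
`v_P(l_n τ^n(x)) ≥ v_P(x)` for all `n ≥ 1`, and `log_{E,P}` is an isometry on that
disc: `v_P(log_{E,P}(x)) = v_P(x)`. -/
theorem stmt_8 {R : Type*} [CommRing R]
    (q dP s d : ℕ) (hq : 2 ≤ q) (hdP : 0 < dP) (hd : 0 < d) [NeZero d]
    (v : R → WithTop ℚ)
    (hv0 : v 0 = ⊤)
    (hvadd : ∀ x y : R, min (v x) (v y) ≤ v (x + y))
    (hvmul : ∀ x y : R, v x + v y ≤ v (x * y))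
    (φ : R →+* R) (hφ : ∀ x : R, v (φ x) = q • v x)
    (l : ℕ → Matrix (Fin d) (Fin d) R) (hl0 : l 0 = 1)
    (hl : ∀ n i j, ((-(q ^ s * (n / dP) : ℕ) : ℚ) : WithTop ℚ) ≤ v (l n i j))
    (hcomplete : ∀ f : ℕ → Fin d → R,
      (∀ N : ℚ, ∃ M, ∀ m ≥ M, ∀ k : ℕ, ∀ i, (N : WithTop ℚ) ≤ v (f (m + k) i - f m i)) →
      ∃ y : Fin d → R, ∀ N : ℚ, ∃ M, ∀ m ≥ M, ∀ i, (N : WithTop ℚ) ≤ v (y i - f m i)) :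
    ∀ x : Fin d → R, (∀ i, 0 < v (x i)) →
      ∃ y : Fin d → R,
        (∀ N : ℚ, ∃ M, ∀ m ≥ M, ∀ i, (N : WithTop ℚ)
            ≤ v (y i - (∑ n ∈ Finset.range m, (l n).mulVec fun j => φ^[n] (x j)) i)) ∧
        ((((q ^ s : ℚ) / ((q : ℚ) ^ dP - 1) : ℚ) : WithTop ℚ)
            < Finset.univ.inf (fun i => v (x i)) →
          (∀ n : ℕ, 1 ≤ n → ∀ i,
            Finset.univ.inf (fun j => v (x j))
              ≤ v (((l n).mulVec fun j => φ^[n] (x j)) i)) ∧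
          Finset.univ.inf (fun i => v (y i)) = Finset.univ.inf (fun i => v (x i))) :=
  stmt_8_general q dP s d hq hdP v hv0 hvadd hvmul φ hφ l hl0 hl hcomplete
end

section
/- Let Ẽ be the z-deformation of an Anderson t-module E over O_L, acting on T_z(L_P)^d. For every nonzero a ∈ A and every nonzero x ∈ T_z(L_P)^d, one has Ẽ_a(x) ≠ 0. In other words, the Ã-module Ẽ(T_z(L_P)) is torsion-free over A. -/
/-!
Since `Ẽ_a = ∂_E(a) + z·(…)`, the lowest nonvanishing `z`-coefficient `v` of `x` is mapped to
`∂_E(a) v` in the same degree of `Ẽ_a(x)`. As `∂_E(a) = a·I_d + N` with `a` invertible and `N`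
nilpotent, `∂_E(a)` is invertible, so `∂_E(a) v ≠ 0`.
-/

open PowerSeries Matrix

section

variable {R : Type*} [CommRing R] {ι : Type*} [Fintype ι]

theorem PowerSeries.coeff_map_iterate (φ : R →+* R) (i m : ℕ) (f : R⟦X⟧) :
    coeff m ((map φ)^[i] f) = φ^[i] (coeff m f) := by
  induction i generalizing f with
  | zero => rfl
  | succ i ih => rw [Function.iterate_succ_apply, ih, coeff_map, Function.iterate_succ_apply]

theorem PowerSeries.exists_coeff_ne_zero_of_ne_zero {x : ι → R⟦X⟧} (hx : x ≠ 0) :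
    ∃ n, (fun k => coeff n (x k)) ≠ 0 ∧ ∀ m < n, ∀ k, coeff m (x k) = 0 := by
  classical
  have hex : ∃ n, (fun k => coeff n (x k)) ≠ 0 := by
    by_contra! h
    exact hx (funext fun k => ext fun n => congrFun (h n) k)
  refine ⟨Nat.find hex, Nat.find_spec hex, fun m hm k => ?_⟩
  exact congrFun (not_not.mp (Nat.find_min hex hm)) k

/-- The `z`-deformation `Ẽ = ∑_{i ≤ r} C i z^i τ^i` of `E = ∑_{i ≤ r} C i τ^i`, where `τ` acts on
`R⟦z⟧` coefficientwise by `φ`. -/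
noncomputable def zDeformation (φ : R →+* R) (C : ℕ → Matrix ι ι R) (r : ℕ) (x : ι → R⟦X⟧) : ι → R⟦X⟧ :=
  fun j => ∑ i ∈ Finset.range (r + 1), X ^ i * ∑ k, PowerSeries.C (C i j k) * (map φ)^[i] (x k)

theorem coeff_zDeformation_of_forall_lt (φ : R →+* R) (C : ℕ → Matrix ι ι R) (r : ℕ)
    {x : ι → R⟦X⟧} {n : ℕ} (hx : ∀ m < n, ∀ k, coeff m (x k) = 0) (j : ι) :
    coeff n (zDeformation φ C r x j) = (C 0 *ᵥ fun k => coeff n (x k)) j := by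
  have higher_vanish : ∀ i ∈ Finset.range (r + 1), i ≠ 0 →
      coeff n (X ^ i * ∑ k, PowerSeries.C (C i j k) * (map φ)^[i] (x k)) = 0 := by
    intro i _ hi
    rw [coeff_X_pow_mul']
    split_ifs with hin
    · simp [map_sum, coeff_C_mul, coeff_map_iterate, hx (n - i) (by omega)]
    · rfl
  rw [zDeformation, map_sum, Finset.sum_eq_single_of_mem 0 (by simp) higher_vanish]
  simp [map_sum, coeff_C_mul, mulVec, dotProduct]

end

theorem Matrix.isUnit_algebraMap_smul_one_add {K R n : Type*} [Field K] [CommRing R]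
    [Algebra K R] [Fintype n] [DecidableEq n] {a : K} (ha : a ≠ 0) {N : Matrix n n R}
    (hN : IsNilpotent N) : IsUnit (algebraMap K R a • (1 : Matrix n n R) + N) := by
  refine hN.isUnit_add_left_of_commute ?_ ((Commute.one_right N).smul_right _)
  rw [← Algebra.algebraMap_eq_smul_one]
  exact (ha.isUnit.map (algebraMap K R)).map _

theorem stmt_10_general {K R : Type*} [Field K] [CommRing R] [Algebra K R]
    (d r : ℕ)
    (φ : R →+* R)
    (C : ℕ → Matrix (Fin d) (Fin d) R)
    (a : K) (ha : a ≠ 0)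
    (N : Matrix (Fin d) (Fin d) R) (hN : IsNilpotent N)
    (hC0 : C 0 = algebraMap K R a • (1 : Matrix (Fin d) (Fin d) R) + N)
    (x : Fin d → PowerSeries R) (hx : x ≠ 0) :
    (fun j => ∑ i ∈ Finset.range (r + 1),
        (PowerSeries.X : PowerSeries R) ^ i *
          ∑ k, PowerSeries.C (C i j k) * (PowerSeries.map φ)^[i] (x k)) ≠ 0 := by
  change zDeformation φ C r x ≠ 0
  obtain ⟨n, hvn, hlow⟩ := exists_coeff_ne_zero_of_ne_zero hx
  have hunit : IsUnit (C 0) := hC0 ▸ isUnit_algebraMap_smul_one_add ha hN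
  intro h0
  refine hvn (mulVec_injective_of_isUnit hunit ?_)
  funext j
  rw [← coeff_zDeformation_of_forall_lt φ C r hlow, h0]
  simp

/-- (Torsion-freeness of `Ẽ(T_z(L_P))`.)  Let `R` stand for `L_P`
(a `K`-algebra, `K` the fraction field containing `A`), and let the `z`-deformation
`Ẽ_a = ∑_{i=0}^{r_a} E_{a,i} z^i τ^i` act on `(R[[z]])^d ⊇ T_z(L_P)^d`, where `τ` is
the `q`-Frobenius acting coefficientwise and `E_{a,0} = ∂_E(a) = a·I_d + N` with `N`
nilpotent.  Then for every nonzero `a ∈ A` (viewed in `K`, hence a unit in `L_P`)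
and every nonzero `x`, one has `Ẽ_a(x) ≠ 0`. -/
theorem stmt_10 {K R : Type*} [Field K] [CommRing R] [Algebra K R] [Nontrivial R]
    (q d r : ℕ) (hq : 2 ≤ q) (hd : 0 < d)
    (φ : R →+* R) (hφ : ∀ x : R, φ x = x ^ q)
    (C : ℕ → Matrix (Fin d) (Fin d) R)
    (a : K) (ha : a ≠ 0)
    (N : Matrix (Fin d) (Fin d) R) (hN : IsNilpotent N)
    (hC0 : C 0 = algebraMap K R a • (1 : Matrix (Fin d) (Fin d) R) + N)
    (x : Fin d → PowerSeries R) (hx : x ≠ 0) :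
    (fun j => ∑ i ∈ Finset.range (r + 1),
        (PowerSeries.X : PowerSeries R) ^ i *
          ∑ k, PowerSeries.C (C i j k) * (PowerSeries.map φ)^[i] (x k)) ≠ 0 :=
  stmt_10_general d r φ C a ha N hN hC0 x hx
end

section
/- Let φ : A → A{τ} be a Drinfeld module of rank r over A, m ∈ A∖{0}, and ψ = m^{−1}φm. Then ord_{z=1} L_P(ψ̃/Ã) = ord_{z=1} L_P(φ̃/Ã), where ord_{z=1} denotes the largest n such that (z−1)^n divides the P-adic L-series in T_z(K_P). -/
/-!
Since `z - 1` is a unit in `K_P⟦z⟧`, one always has `L_P(φ̃/Ã) = (z - 1)ⁿ h` for some power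
series `h`; the point is that `h` lies in the Tate algebra. The ratio relation puts `g · h` in
the Tate algebra for a polynomial `g` with `g(1) ≠ 0`, and writing `g = g(1) + (z - 1) w`
strips the factors `z - 1` off one at a time.
-/

open Filter PowerSeries

theorem WithTop.eq_zero_of_eq_add_self {a : WithTop ℤ} (ha : a ≠ ⊤) (h : a = a + a) : a = 0 := by
  lift a to ℤ using ha
  norm_cast at h ⊢
  omega

theorem PowerSeries.isUnit_X_sub_one {K : Type*} [Field K] : IsUnit (X - 1 : K⟦X⟧) :=
  isUnit_iff_constantCoeff.2 (by simp)

namespace AddValuation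

section CommRing

variable {R : Type*} [CommRing R] {v : AddValuation R (WithTop ℤ)}

variable (v) in
/-- Membership in the Tate algebra `T_z` of `v`, with `z = X`. -/
def IsRestricted (f : R⟦X⟧) : Prop :=
  ∀ N : ℤ, ∀ᶠ m in atTop, (N : WithTop ℤ) ≤ v (coeff m f)

theorem isRestricted_iff {f : R⟦X⟧} :
    IsRestricted v f ↔ ∀ N : ℤ, ∃ M, ∀ m ≥ M, (N : WithTop ℤ) ≤ v (coeff m f) := by
  simp only [IsRestricted, eventually_atTop]

namespace IsRestricted

variable {f g : R⟦X⟧}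

theorem add (hf : IsRestricted v f) (hg : IsRestricted v g) : IsRestricted v (f + g) :=
  fun N => ((hf N).and (hg N)).mono fun m ⟨hfm, hgm⟩ => by
    rw [_root_.map_add]
    exact (le_min hfm hgm).trans (v.map_add _ _)

theorem neg (hf : IsRestricted v f) : IsRestricted v (-f) :=
  fun N => (hf N).mono fun m hm => by rwa [_root_.map_neg, v.map_neg]

theorem sub (hf : IsRestricted v f) (hg : IsRestricted v g) : IsRestricted v (f - g) := by
  rw [sub_eq_add_neg]
  exact hf.add hg.neg

theorem C_mul (c : R) (hf : IsRestricted v f) : IsRestricted v (C c * f) := by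
  intro N
  induction hc : v c using WithTop.recTopCoe with
  | top => exact .of_forall fun m => by simp [coeff_C_mul, v.map_mul, hc]
  | coe k =>
    refine (hf (N - k)).mono fun m hm => ?_
    rw [coeff_C_mul, v.map_mul, hc]
    calc (N : WithTop ℤ) = (k : WithTop ℤ) + ((N - k : ℤ) : WithTop ℤ) := by norm_cast; ring
      _ ≤ k + v (coeff m f) := add_le_add_right hm _

theorem X_mul (hf : IsRestricted v f) : IsRestricted v (X * f) := by
  intro N
  obtain ⟨M, hM⟩ := eventually_atTop.1 (hf N)
  refine eventually_atTop.2 ⟨M + 1, fun m hm => ?_⟩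
  cases m with
  | zero => omega
  | succ m => rw [coeff_succ_X_mul]; exact hM m (by omega)

theorem X_pow_mul (k : ℕ) (hf : IsRestricted v f) : IsRestricted v (X ^ k * f) := by
  induction k with
  | zero => rwa [pow_zero, one_mul]
  | succ k ih => rw [pow_succ', mul_assoc]; exact ih.X_mul

theorem X_sub_one_mul (hf : IsRestricted v f) : IsRestricted v ((X - 1) * f) := by
  rw [sub_mul, one_mul]
  exact hf.X_mul.sub hf

theorem polynomial_mul (p : Polynomial R) (hf : IsRestricted v f) :
    IsRestricted v (p * f) := by
  induction p using Polynomial.induction_on' with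
  | add p q hp hq => rw [Polynomial.coe_add, add_mul]; exact hp.add hq
  | monomial k a =>
    rw [← Polynomial.C_mul_X_pow_eq_monomial, Polynomial.coe_mul, Polynomial.coe_C,
      Polynomial.coe_pow, Polynomial.coe_X, mul_assoc]
    exact (hf.X_pow_mul k).C_mul a

end IsRestricted

end CommRing

section Field

variable {K : Type*} [Field K] {v : AddValuation K (WithTop ℤ)}

namespace IsRestricted

variable {g : Polynomial K} {q : K⟦X⟧}

theorem of_X_sub_one_mul (hg : g.eval 1 ≠ 0) (h₁ : IsRestricted v ((X - 1) * q))
    (h₂ : IsRestricted v (g * q)) : IsRestricted v q := by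
  obtain ⟨w, hw⟩ := Polynomial.X_sub_C_dvd_sub_C_eval (a := (1 : K)) (p := g)
  have hgw : (g : K⟦X⟧) = C (g.eval 1) + (X - 1) * (w : K⟦X⟧) := by
    have hpoly : g = Polynomial.C (g.eval 1) + (Polynomial.X - Polynomial.C 1) * w := by
      rw [← hw]; ring
    conv_lhs => rw [hpoly]
    simp
  have hCq : IsRestricted v (C (g.eval 1) * q) := by
    rw [show C (g.eval 1) * q = (g : K⟦X⟧) * q - (w : K⟦X⟧) * ((X - 1) * q) by rw [hgw]; ring]
    exact h₂.sub (h₁.polynomial_mul w)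
  have := hCq.C_mul (g.eval 1)⁻¹
  rwa [← mul_assoc, ← _root_.map_mul, inv_mul_cancel₀ hg, _root_.map_one, one_mul] at this

theorem of_X_sub_one_pow_mul (hg : g.eval 1 ≠ 0) (k : ℕ)
    (h₁ : IsRestricted v ((X - 1) ^ k * q)) (h₂ : IsRestricted v (g * q)) :
    IsRestricted v q := by
  induction k generalizing q with
  | zero => rwa [pow_zero, one_mul] at h₁
  | succ k ih =>
    refine of_X_sub_one_mul hg (ih ?_ ?_) h₂
    · rwa [pow_succ, mul_assoc] at h₁
    · rw [mul_left_comm]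
      exact h₂.X_sub_one_mul

end IsRestricted

theorem exists_isRestricted_of_mul_eq {g₁ g₂ : Polynomial K}
    (hg₂ : g₂.eval 1 ≠ 0) {F₁ F₂ : K⟦X⟧} (hF₂ : IsRestricted v F₂)
    (hF : (g₁ : K⟦X⟧) * F₁ = g₂ * F₂) {n : ℕ} {h : K⟦X⟧} (hh : IsRestricted v h)
    (hF₁ : F₁ = (X - 1) ^ n * h) :
    ∃ h', IsRestricted v h' ∧ F₂ = (X - 1) ^ n * h' := by
  obtain ⟨u, hu⟩ := (isUnit_X_sub_one (K := K)).pow n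
  set h' : K⟦X⟧ := ↑u⁻¹ * F₂
  have hF₂u : F₂ = (X - 1) ^ n * h' := by rw [← hu, Units.mul_inv_cancel_left]
  have hgh : (g₂ : K⟦X⟧) * h' = g₁ * h := by
    apply (isUnit_X_sub_one.pow n).mul_left_cancel
    calc (X - 1) ^ n * ((g₂ : K⟦X⟧) * h') = (g₂ : K⟦X⟧) * ((X - 1) ^ n * h') := by ring
      _ = (g₁ : K⟦X⟧) * F₁ := by rw [← hF₂u, hF]
      _ = (X - 1) ^ n * ((g₁ : K⟦X⟧) * h) := by rw [hF₁]; ring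
  refine ⟨h', ?_, hF₂u⟩
  refine .of_X_sub_one_pow_mul hg₂ n (hF₂u ▸ hF₂) ?_
  rw [hgh]
  exact hh.polynomial_mul g₁

end Field

end AddValuation

theorem stmt_19_general {Fq K_P : Type*} [Field Fq] [Field K_P]
    (v : K_P → WithTop ℤ) (hv0 : ∀ x : K_P, v x = ⊤ ↔ x = 0)
    (hvadd : ∀ x y : K_P, min (v x) (v y) ≤ v (x + y))
    (hvmul : ∀ x y : K_P, v (x * y) = v x + v y)
    (ι : Polynomial Fq →+* K_P) (hinj : Function.Injective ι)
    (Tate : PowerSeries K_P → Prop)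
    (hTate : ∀ f, Tate f ↔
      ∀ N : ℤ, ∃ M, ∀ m ≥ M, (N : WithTop ℤ) ≤ v (PowerSeries.coeff m f))
    (LPphi LPpsi : PowerSeries K_P) (hT1 : Tate LPphi) (hT2 : Tate LPpsi)
    -- `g_{P,φ}(z)`, `g_{P,ψ}(z)` and `∏_{Q ∣ m} g_{Q,φ}(z)`, all in `A[z]`,
    -- nonvanishing at `z = 1`
    (gphiP gpsiP prodG : Polynomial (Polynomial Fq))
    (h1 : Polynomial.eval (1 : Polynomial Fq) gphiP ≠ 0)
    (h2 : Polynomial.eval (1 : Polynomial Fq) gpsiP ≠ 0)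
    (h3 : Polynomial.eval (1 : Polynomial Fq) prodG ≠ 0)
    -- `cK = (∏_{Q ∣ m} Q)⁻¹ ∈ K_P`
    (cK : K_P) (hcK : cK ≠ 0)
    (hrel : ((Polynomial.map ι gphiP : Polynomial K_P) : PowerSeries K_P) * LPpsi
        = ((Polynomial.map ι gpsiP : Polynomial K_P) : PowerSeries K_P) * LPphi
          * (PowerSeries.C cK *
              ((Polynomial.map ι prodG : Polynomial K_P) : PowerSeries K_P))) :
    ∀ n : ℕ,
      (∃ h : PowerSeries K_P, Tate h ∧ LPpsi = (PowerSeries.X - 1) ^ n * h) ↔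
      (∃ h : PowerSeries K_P, Tate h ∧ LPphi = (PowerSeries.X - 1) ^ n * h) := by
  have hv1 : v 1 = 0 :=
    WithTop.eq_zero_of_eq_add_self (mt (hv0 1).1 one_ne_zero) (by rw [← hvmul, one_mul])
  let w : AddValuation K_P (WithTop ℤ) := AddValuation.of v ((hv0 0).2 rfl) hv1 hvadd hvmul
  obtain rfl : Tate = w.IsRestricted :=
    funext fun f => propext ((hTate f).trans (AddValuation.isRestricted_iff (v := w)).symm)
  have eval_map_ne_zero {p : Polynomial (Polynomial Fq)} (hp : p.eval 1 ≠ 0) :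
      (p.map ι).eval 1 ≠ 0 := by
    rw [Polynomial.eval_one_map]
    exact (map_ne_zero_iff ι hinj).2 hp
  set G : Polynomial K_P := Polynomial.C cK * gpsiP.map ι * prodG.map ι
  have hG : G.eval 1 ≠ 0 := by
    simp only [G, Polynomial.eval_mul, Polynomial.eval_C]
    exact mul_ne_zero (mul_ne_zero hcK (eval_map_ne_zero h2)) (eval_map_ne_zero h3)
  have hrel' : ((gphiP.map ι : Polynomial K_P) : K_P⟦X⟧) * LPpsi = G * LPphi := by
    rw [hrel]
    simp only [G, Polynomial.coe_mul, Polynomial.coe_C]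
    ring
  intro n
  exact ⟨fun ⟨_, hh, hψ⟩ => AddValuation.exists_isRestricted_of_mul_eq hG hT1 hrel' hh hψ,
    fun ⟨_, hh, hφ⟩ => AddValuation.exists_isRestricted_of_mul_eq (eval_map_ne_zero h1) hT2
      hrel'.symm hh hφ⟩

/-- (Invariance of the vanishing order at `z = 1` under isogeny.)
Let `φ` be a Drinfeld module over `A = F_q[θ]`, `m ∈ A∖{0}` and `ψ = m⁻¹φm`.  The
`P`-adic L-series `L_P(φ̃/Ã), L_P(ψ̃/Ã) ∈ T_z(K_P)` satisfy the ratio relation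
`g_{P,φ}(z)·L_P(ψ̃/Ã) = g_{P,ψ}(z)·L_P(φ̃/Ã)·∏_{Q∣m} g_{Q,φ}(z)/Q`, where the
polynomials `g_{P,φ}(z), g_{P,ψ}(z), ∏_{Q∣m} g_{Q,φ}(z) ∈ A[z]` do not vanish at
`z = 1`.  Then `ord_{z=1} L_P(ψ̃/Ã) = ord_{z=1} L_P(φ̃/Ã)`: for every `n`, `(z−1)^n`
divides `L_P(ψ̃/Ã)` in `T_z(K_P)` iff it divides `L_P(φ̃/Ã)` in `T_z(K_P)`. -/
theorem stmt_19 {Fq K_P : Type*} [Field Fq] [Fintype Fq] [Field K_P]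
    (v : K_P → WithTop ℤ) (hv0 : ∀ x : K_P, v x = ⊤ ↔ x = 0)
    (hvadd : ∀ x y : K_P, min (v x) (v y) ≤ v (x + y))
    (hvmul : ∀ x y : K_P, v (x * y) = v x + v y)
    (ι : Polynomial Fq →+* K_P) (hinj : Function.Injective ι)
    (hιv : ∀ p : Polynomial Fq, p ≠ 0 → (0 : WithTop ℤ) ≤ v (ι p))
    (Tate : PowerSeries K_P → Prop)
    (hTate : ∀ f, Tate f ↔
      ∀ N : ℤ, ∃ M, ∀ m ≥ M, (N : WithTop ℤ) ≤ v (PowerSeries.coeff m f))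
    (LPphi LPpsi : PowerSeries K_P) (hT1 : Tate LPphi) (hT2 : Tate LPpsi)
    -- `g_{P,φ}(z)`, `g_{P,ψ}(z)` and `∏_{Q ∣ m} g_{Q,φ}(z)`, all in `A[z]`,
    -- nonvanishing at `z = 1`
    (gphiP gpsiP prodG : Polynomial (Polynomial Fq))
    (h1 : Polynomial.eval (1 : Polynomial Fq) gphiP ≠ 0)
    (h2 : Polynomial.eval (1 : Polynomial Fq) gpsiP ≠ 0)
    (h3 : Polynomial.eval (1 : Polynomial Fq) prodG ≠ 0)
    -- `cK = (∏_{Q ∣ m} Q)⁻¹ ∈ K_P`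
    (cK : K_P) (hcK : cK ≠ 0)
    (hrel : ((Polynomial.map ι gphiP : Polynomial K_P) : PowerSeries K_P) * LPpsi
        = ((Polynomial.map ι gpsiP : Polynomial K_P) : PowerSeries K_P) * LPphi
          * (PowerSeries.C cK *
              ((Polynomial.map ι prodG : Polynomial K_P) : PowerSeries K_P))) :
    ∀ n : ℕ,
      (∃ h : PowerSeries K_P, Tate h ∧ LPpsi = (PowerSeries.X - 1) ^ n * h) ↔
      (∃ h : PowerSeries K_P, Tate h ∧ LPphi = (PowerSeries.X - 1) ^ n * h) :=
  stmt_19_general v hv0 hvadd hvmul ι hinj Tate hTate LPphi LPpsi hT1 hT2 gphiP gpsiP prodG h1 h2 h3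
    cK hcK hrel
end
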